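/- (Analytic form of Theorem 3.3.) Let Φ be a branching mechanism whose Lévy measure π has unbounded support, i.e. π((r,∞)) > 0 for every r > 0. For r > 0 let u^r_t(λ) denote the unique locally bounded nonnegative solution of u_t = λt − ∫₀ᵗ Φ^{(r,∞)}(u_s) ds. Then for every t ∈ (0,∞) and every x > 0, lim_{r→∞} (1 − exp(−x · u^r_t(π((r,∞))))) / π((r,∞)) = x(1 − e^{−αt})/α, where (1 − e^{−αt})/α is interpreted as t when α = 0. Equivalently, lim_{r→∞} u^r_t(π((r,∞)))/π((r,∞)) = (1 − e^{−αt})/α. -/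

import Mathlib

/-!
Write `Φ^{(r,∞)}(λ) = αλ + R_r(λ)`. For `λ ≥ 0` one has
`0 ≤ R_r(λ) ≤ βλ² + J(λ) + λ ∫_{(r,∞)} θ π(dθ)`, where `J` is the jump part of `Φ`.
With `ε = π((r,∞))` and `w(t) = ∫₀ᵗ e^{-αs} ds`, variation of constants gives
`ε w(t) - u_t = ∫₀ᵗ e^{-α(t-s)} R_r(u_s) ds`. Since `R_r ≥ 0`, this yields `0 ≤ u ≤ ε w`, and the
upper bound on `R_r` then makes the right-hand side `o(ε)` as `r → ∞`: here `ε → 0`,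
`J(λ) = o(λ)` and `∫_{(r,∞)} θ π(dθ) → 0`. The claim about `1 - e^{-x u}` follows from
`1 - e^{-y} = y + O(y²)`.
-/

open MeasureTheory Filter Set

/-- The branching mechanism `Φ(λ) = αλ + βλ² + ∫_{(0,∞)} (e^{-λθ} - 1 + λθ) π(dθ)`. -/
noncomputable def Phi (α β : ℝ) (π : Measure ℝ) (lam : ℝ) : ℝ :=
  α * lam + β * lam ^ 2 + ∫ θ, (Real.exp (-lam * θ) - 1 + lam * θ) ∂π

/-- The `(r,∞)`-truncated branching mechanism
`Φ^{(r,∞)}(λ) = Φ(λ) + ∫_{(r,∞)} (1 - e^{-λθ}) π(dθ)`. -/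
noncomputable def PhiIoi (α β : ℝ) (π : Measure ℝ) (r lam : ℝ) : ℝ :=
  Phi α β π lam + ∫ θ in Set.Ioi r, (1 - Real.exp (-lam * θ)) ∂π

/-- `u` is a locally bounded nonnegative solution of `u_t = λt - ∫₀ᵗ Φ(u_s) ds`. -/
def IsMassSolution (Φ : ℝ → ℝ) (lam : ℝ) (u : ℝ → ℝ) : Prop :=
  (∀ t, 0 ≤ t → 0 ≤ u t) ∧
  (∀ T, 0 < T → BddAbove (u '' Set.Icc 0 T)) ∧
  (∀ t, 0 ≤ t → u t = lam * t - ∫ s in (0:ℝ)..t, Φ (u s))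

open scoped Topology

namespace Real

lemma exp_neg_sub_one_add_nonneg (x : ℝ) : 0 ≤ exp (-x) - 1 + x := by
  linarith [add_one_le_exp (-x)]

lemma exp_neg_sub_one_add_le_min {x : ℝ} (hx : 0 ≤ x) : exp (-x) - 1 + x ≤ min x (x ^ 2) := by
  refine le_min (by linarith [exp_le_one_iff.2 (neg_nonpos.2 hx)]) ?_
  rcases le_total x 1 with hx1 | hx1
  · have := abs_exp_sub_one_sub_id_le (x := -x) (by rwa [abs_neg, abs_of_nonneg hx])
    rw [neg_sq] at this
    linarith [le_abs_self (exp (-x) - 1 - -x)]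
  · nlinarith [exp_le_one_iff.2 (neg_nonpos.2 hx)]

lemma monotoneOn_exp_neg_sub_one_add : MonotoneOn (fun x => exp (-x) - 1 + x) (Ici 0) := by
  intro a (ha : 0 ≤ a) b _ hab
  have hsplit : exp (-a) * exp (-(b - a)) = exp (-b) := by rw [← exp_add]; ring_nf
  nlinarith [one_sub_le_exp_neg (b - a), exp_le_one_iff.2 (neg_nonpos.2 ha), exp_pos (-a)]

end Real

lemma jumpKernel_nonneg (lam θ : ℝ) : 0 ≤ Real.exp (-lam * θ) - 1 + lam * θ := by
  simpa only [neg_mul] using Real.exp_neg_sub_one_add_nonneg (lam * θ)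

lemma jumpKernel_le {lam θ : ℝ} (hl : 0 ≤ lam) (hθ : 0 ≤ θ) :
    Real.exp (-lam * θ) - 1 + lam * θ ≤ (lam + lam ^ 2) * min θ (θ ^ 2) := by
  have h := Real.exp_neg_sub_one_add_le_min (mul_nonneg hl hθ)
  rw [neg_mul]
  rcases le_total θ 1 with hθ1 | hθ1
  · rw [min_eq_right (by nlinarith)]
    nlinarith [min_le_right (lam * θ) ((lam * θ) ^ 2)]
  · rw [min_eq_left (by nlinarith)]
    nlinarith [min_le_left (lam * θ) ((lam * θ) ^ 2)]

noncomputable def jumpPart (π : Measure ℝ) (lam : ℝ) : ℝ :=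
  ∫ θ, (Real.exp (-lam * θ) - 1 + lam * θ) ∂π

section LevyMeasure

variable {π : Measure ℝ}

lemma ae_pos_of_measure_Iic_eq_zero (hsupp : π (Iic 0) = 0) : ∀ᵐ θ ∂π, 0 < θ := by
  rw [ae_iff]
  convert hsupp using 2
  ext θ
  simp [not_lt]

lemma integrable_jumpKernel (hsupp : π (Iic 0) = 0)
    (hint : Integrable (fun θ => min θ (θ ^ 2)) π) {lam : ℝ} (hl : 0 ≤ lam) :
    Integrable (fun θ => Real.exp (-lam * θ) - 1 + lam * θ) π := by
  refine (hint.const_mul (lam + lam ^ 2)).mono' (by fun_prop) ?_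
  filter_upwards [ae_pos_of_measure_Iic_eq_zero hsupp] with θ hθ
  rw [Real.norm_eq_abs, abs_of_nonneg (jumpKernel_nonneg lam θ)]
  exact jumpKernel_le hl hθ.le

lemma jumpPart_nonneg (lam : ℝ) : 0 ≤ jumpPart π lam :=
  integral_nonneg fun θ => jumpKernel_nonneg lam θ

lemma jumpPart_mono (hsupp : π (Iic 0) = 0) (hint : Integrable (fun θ => min θ (θ ^ 2)) π)
    {a b : ℝ} (ha : 0 ≤ a) (hab : a ≤ b) : jumpPart π a ≤ jumpPart π b := by
  refine integral_mono_ae (integrable_jumpKernel hsupp hint ha)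
    (integrable_jumpKernel hsupp hint (ha.trans hab)) ?_
  filter_upwards [ae_pos_of_measure_Iic_eq_zero hsupp] with θ hθ
  simpa only [neg_mul] using Real.monotoneOn_exp_neg_sub_one_add (mem_Ici.2 (by positivity))
    (mem_Ici.2 (by nlinarith)) (mul_le_mul_of_nonneg_right hab hθ.le)

lemma continuousOn_jumpPart (hsupp : π (Iic 0) = 0)
    (hint : Integrable (fun θ => min θ (θ ^ 2)) π) : ContinuousOn (jumpPart π) (Ici 0) := by
  intro l₀ _
  refine continuousWithinAt_of_dominated
    (bound := fun θ => ((l₀ + 1) + (l₀ + 1) ^ 2) * min θ (θ ^ 2))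
    (Eventually.of_forall fun _ => by fun_prop) ?_ (hint.const_mul _)
    (Eventually.of_forall fun θ => by fun_prop)
  filter_upwards [nhdsWithin_le_nhds (Iio_mem_nhds (lt_add_one l₀)), self_mem_nhdsWithin]
    with lam (hlt : lam < l₀ + 1) (hl : 0 ≤ lam)
  filter_upwards [ae_pos_of_measure_Iic_eq_zero hsupp] with θ hθ
  rw [Real.norm_eq_abs, abs_of_nonneg (jumpKernel_nonneg lam θ)]
  refine (jumpKernel_le hl hθ.le).trans (mul_le_mul_of_nonneg_right ?_ (by positivity))
  nlinarith

lemma tendsto_jumpPart_div (hsupp : π (Iic 0) = 0)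
    (hint : Integrable (fun θ => min θ (θ ^ 2)) π) :
    Tendsto (fun lam => jumpPart π lam / lam) (𝓝[>] 0) (𝓝 0) := by
  simp only [jumpPart, ← integral_div]
  have hlim := tendsto_integral_filter_of_dominated_convergence (μ := π) (l := 𝓝[>] (0:ℝ))
    (F := fun lam θ => (Real.exp (-lam * θ) - 1 + lam * θ) / lam) (f := fun _ => 0)
    (fun θ => 2 * min θ (θ ^ 2)) (Eventually.of_forall fun _ => by fun_prop) ?_
    (hint.const_mul 2) ?_
  · simpa using hlim
  · filter_upwards [Ioc_mem_nhdsGT_of_mem ⟨le_refl (0:ℝ), one_pos⟩] with lam ⟨hl0, hl1⟩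
    filter_upwards [ae_pos_of_measure_Iic_eq_zero hsupp] with θ hθ
    rw [Real.norm_eq_abs, abs_of_nonneg (div_nonneg (jumpKernel_nonneg lam θ) hl0.le),
      div_le_iff₀ hl0]
    have hm : 0 ≤ min θ (θ ^ 2) := by positivity
    nlinarith [jumpKernel_le hl0.le hθ.le, mul_nonneg hl0.le hm]
  · filter_upwards [ae_pos_of_measure_Iic_eq_zero hsupp] with θ hθ
    have hlin : Tendsto (fun lam : ℝ => lam * θ ^ 2) (𝓝[>] 0) (𝓝 0) :=
      tendsto_nhdsWithin_of_tendsto_nhds (by simpa using (continuous_mul_const (θ ^ 2)).tendsto 0)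
    refine squeeze_zero' ?_ ?_ hlin
    · filter_upwards [self_mem_nhdsWithin] with lam (hl : 0 < lam)
      exact div_nonneg (jumpKernel_nonneg lam θ) hl.le
    · filter_upwards [self_mem_nhdsWithin] with lam (hl : 0 < lam)
      rw [div_le_iff₀ hl, neg_mul]
      have := (Real.exp_neg_sub_one_add_le_min (mul_nonneg hl.le hθ.le)).trans (min_le_right _ _)
      nlinarith

lemma measure_Ioi_lt_top (hint : Integrable (fun θ => min θ (θ ^ 2)) π) {r : ℝ} (hr : 0 < r) :
    π (Ioi r) < ⊤ := by
  refine (measure_mono fun θ (hθ : r < θ) => ?_).trans_lt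
    (hint.measure_ge_lt_top (ε := min r (r ^ 2)) (by positivity))
  exact le_min ((min_le_left _ _).trans hθ.le) ((min_le_right _ _).trans (by nlinarith))

lemma integrableOn_Ioi_id (hint : Integrable (fun θ => min θ (θ ^ 2)) π) {r : ℝ} (hr : 0 < r) :
    IntegrableOn (fun θ => θ) (Ioi r) π := by
  refine ((hint.restrict (s := Ioi r)).const_mul (min r 1)⁻¹).mono' aestronglyMeasurable_id ?_
  rw [ae_restrict_iff' measurableSet_Ioi]
  refine Eventually.of_forall fun θ (hθ : r < θ) => ?_
  rw [Real.norm_eq_abs, abs_of_pos (hr.trans hθ), inv_mul_eq_div, le_div_iff₀ (by positivity)]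
  rcases le_total 1 θ with h | h
  · rw [min_eq_left (a := θ) (by nlinarith)]
    nlinarith [min_le_right r 1]
  · rw [min_eq_right (a := θ) (by nlinarith)]
    nlinarith [min_le_left r 1]

lemma tendsto_setIntegral_Ioi_id (hint : Integrable (fun θ => min θ (θ ^ 2)) π) :
    Tendsto (fun r => ∫ θ in Ioi r, θ ∂π) atTop (𝓝 0) := by
  simp only [← integral_indicator measurableSet_Ioi]
  have hlim := tendsto_integral_filter_of_dominated_convergence (μ := π) (l := atTop)
    (F := fun r => (Ioi r).indicator fun θ => θ) (f := fun _ => 0) (fun θ => ‖min θ (θ ^ 2)‖)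
    (Eventually.of_forall fun _ => aestronglyMeasurable_id.indicator measurableSet_Ioi) ?_
    hint.norm (Eventually.of_forall fun θ => tendsto_const_nhds.congr' ?_)
  · simpa using hlim
  · filter_upwards [eventually_ge_atTop 1] with r hr
    refine Eventually.of_forall fun θ => ?_
    by_cases hθ : θ ∈ Ioi r
    · have h1 : 1 ≤ θ := hr.trans (le_of_lt hθ)
      rw [indicator_of_mem hθ, min_eq_left (by nlinarith)]
    · simp [indicator_of_notMem hθ]
  · filter_upwards [eventually_ge_atTop θ] with r hr
    rw [indicator_of_notMem (show θ ∉ Ioi r from not_lt.2 hr)]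

lemma tendsto_measure_Ioi_toReal (hint : Integrable (fun θ => min θ (θ ^ 2)) π) :
    Tendsto (fun r => (π (Ioi r)).toReal) atTop (𝓝 0) := by
  refine squeeze_zero' (Eventually.of_forall fun _ => ENNReal.toReal_nonneg) ?_
    (tendsto_setIntegral_Ioi_id hint)
  filter_upwards [eventually_ge_atTop 1] with r hr
  have hr0 : 0 < r := one_pos.trans_le hr
  calc (π (Ioi r)).toReal = ∫ _ in Ioi r, (1 : ℝ) ∂π := by simp [measureReal_def]
    _ ≤ ∫ θ in Ioi r, θ ∂π :=
      setIntegral_mono_on (integrableOn_const (measure_Ioi_lt_top hint hr0).ne)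
        (integrableOn_Ioi_id hint hr0) measurableSet_Ioi fun θ hθ => hr.trans (le_of_lt hθ)

end LevyMeasure

section Truncated

variable {π : Measure ℝ}

lemma phiIoi_eq (α β : ℝ) (π : Measure ℝ) (r lam : ℝ) :
    PhiIoi α β π r lam = α * lam + β * lam ^ 2 + jumpPart π lam
      + ∫ θ in Ioi r, (1 - Real.exp (-lam * θ)) ∂π := rfl

lemma one_sub_exp_neg_mul_nonneg {lam θ : ℝ} (hl : 0 ≤ lam) (hθ : 0 ≤ θ) :
    0 ≤ 1 - Real.exp (-lam * θ) := by
  rw [sub_nonneg, Real.exp_le_one_iff, neg_mul, neg_nonpos]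
  positivity

lemma continuousOn_phiIoi (α β : ℝ) (hsupp : π (Iic 0) = 0)
    (hint : Integrable (fun θ => min θ (θ ^ 2)) π) {r : ℝ} (hr : 0 < r) :
    ContinuousOn (PhiIoi α β π r) (Ici 0) := by
  have htail : ContinuousOn (fun lam => ∫ θ in Ioi r, (1 - Real.exp (-lam * θ)) ∂π) (Ici 0) := by
    intro l₀ _
    refine continuousWithinAt_of_dominated (bound := fun _ => 1)
      (Eventually.of_forall fun _ => by fun_prop) ?_
      (integrableOn_const (measure_Ioi_lt_top hint hr).ne)
      (Eventually.of_forall fun θ => by fun_prop)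
    filter_upwards [self_mem_nhdsWithin] with lam (hl : 0 ≤ lam)
    rw [ae_restrict_iff' measurableSet_Ioi]
    refine Eventually.of_forall fun θ (hθ : r < θ) => ?_
    rw [Real.norm_eq_abs, abs_of_nonneg (one_sub_exp_neg_mul_nonneg hl (hr.trans hθ).le)]
    linarith [Real.exp_pos (-lam * θ)]
  simp only [funext (phiIoi_eq α β π r)]
  exact ((Continuous.continuousOn (by fun_prop)).add (continuousOn_jumpPart hsupp hint)).add htail

lemma mul_le_phiIoi (α : ℝ) {β : ℝ} (hβ : 0 ≤ β) (π : Measure ℝ) {r lam : ℝ} (hr : 0 ≤ r)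
    (hl : 0 ≤ lam) : α * lam ≤ PhiIoi α β π r lam := by
  have htail : 0 ≤ ∫ θ in Ioi r, (1 - Real.exp (-lam * θ)) ∂π :=
    setIntegral_nonneg measurableSet_Ioi fun θ (hθ : r < θ) =>
      one_sub_exp_neg_mul_nonneg hl (hr.trans hθ.le)
  rw [phiIoi_eq]
  nlinarith [jumpPart_nonneg (π := π) lam]

lemma phiIoi_sub_mul_le (α : ℝ) {β : ℝ} (hβ : 0 ≤ β) (hsupp : π (Iic 0) = 0)
    (hint : Integrable (fun θ => min θ (θ ^ 2)) π) {r lam Λ : ℝ} (hr : 0 < r) (hl : 0 ≤ lam)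
    (hlΛ : lam ≤ Λ) :
    PhiIoi α β π r lam - α * lam ≤ β * Λ ^ 2 + jumpPart π Λ + Λ * ∫ θ in Ioi r, θ ∂π := by
  have hθ : IntegrableOn (fun θ => θ) (Ioi r) π := integrableOn_Ioi_id hint hr
  have htail : ∫ θ in Ioi r, (1 - Real.exp (-lam * θ)) ∂π ≤ Λ * ∫ θ in Ioi r, θ ∂π := by
    rw [← integral_const_mul]
    refine integral_mono_of_nonneg ?_ (hθ.const_mul Λ) ?_ <;>
      refine (ae_restrict_iff' measurableSet_Ioi).2 (Eventually.of_forall fun θ (hθr : r < θ) => ?_)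
    · exact one_sub_exp_neg_mul_nonneg hl (hr.trans hθr).le
    · have := Real.one_sub_le_exp_neg (lam * θ)
      simp only [neg_mul]
      nlinarith [hr.trans hθr]
  have hsq : β * lam ^ 2 ≤ β * Λ ^ 2 := by gcongr
  rw [phiIoi_eq]
  linarith [jumpPart_mono hsupp hint hl hlΛ]

end Truncated

/-- Variation of constants, writing `u' = -a u + (f + a u)`. -/
lemma sub_exp_mul_eq_integral {u f : ℝ → ℝ} (a : ℝ) {t : ℝ} (ht : 0 ≤ t)
    (hu : ContinuousOn u (Icc 0 t)) (hf : ContinuousOn f (Icc 0 t))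
    (hderiv : ∀ s ∈ Ioo 0 t, HasDerivAt u (f s) s) :
    u t - Real.exp (-a * t) * u 0 =
      ∫ s in (0:ℝ)..t, Real.exp (-a * (t - s)) * (f s + a * u s) := by
  have hE : ∀ s, HasDerivAt (fun s => Real.exp (-a * (t - s))) (Real.exp (-a * (t - s)) * a) s :=
    fun s => by simpa using (((hasDerivAt_id s).const_sub t).const_mul (-a)).exp
  have hEc : Continuous fun s => Real.exp (-a * (t - s)) := by fun_prop
  rw [intervalIntegral.integral_eq_sub_of_hasDeriv_right_of_le ht
    (f := fun s => Real.exp (-a * (t - s)) * u s)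
    (f' := fun s => Real.exp (-a * (t - s)) * (f s + a * u s)) (hEc.continuousOn.mul hu)
    (fun s hs => ((hE s).mul (hderiv s hs)).hasDerivWithinAt.congr_deriv (by ring))
    (ContinuousOn.intervalIntegrable_of_Icc ht
      (hEc.continuousOn.mul (hf.add (continuousOn_const.mul hu))))]
  simp

lemma integral_exp_neg_mul_sub (a t : ℝ) :
    ∫ s in (0:ℝ)..t, Real.exp (-a * (t - s)) = ∫ s in (0:ℝ)..t, Real.exp (-a * s) := by
  simpa using
    intervalIntegral.integral_comp_sub_left (a := 0) (b := t) (fun s => Real.exp (-a * s)) t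

lemma integral_exp_neg_mul_pos (α : ℝ) {t : ℝ} (ht : 0 < t) :
    0 < ∫ s in (0:ℝ)..t, Real.exp (-α * s) :=
  intervalIntegral.intervalIntegral_pos_of_pos_on
    ((by fun_prop : Continuous fun s => Real.exp (-α * s)).intervalIntegrable 0 t)
    (fun _ _ => Real.exp_pos _) ht

lemma integral_exp_neg_mul_mono (α : ℝ) {s t : ℝ} (hs : 0 ≤ s) (hst : s ≤ t) :
    ∫ x in (0:ℝ)..s, Real.exp (-α * x) ≤ ∫ x in (0:ℝ)..t, Real.exp (-α * x) :=
  intervalIntegral.integral_mono_interval le_rfl hs hst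
    (Eventually.of_forall fun _ => (Real.exp_pos _).le)
    ((by fun_prop : Continuous fun s => Real.exp (-α * s)).intervalIntegrable 0 t)

section MassEquation

variable {Φ : ℝ → ℝ} {ε : ℝ} {u : ℝ → ℝ}

lemma continuousOn_Icc_of_eq_sub_integral {g : ℝ → ℝ} {T : ℝ} (hT : 0 ≤ T)
    (heq : ∀ t ∈ Icc 0 T, u t = ε * t - ∫ s in (0:ℝ)..t, g s)
    (hg : IntervalIntegrable g volume 0 T) : ContinuousOn u (Icc 0 T) := by
  have hprim := intervalIntegral.continuousOn_primitive_interval' hg left_mem_uIcc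
  rw [uIcc_of_le hT] at hprim
  exact ((continuous_const.mul continuous_id).continuousOn.sub hprim).congr heq

/-- A priori `s ↦ Φ (u s)` need not even be measurable. Past the supremum `c` of the times up to
which it is integrable, the integral in the equation takes the junk value `0`, so `u s = ε s`
there; before `c`, `u` is continuous. Either way `Φ ∘ u` is integrable. -/
lemma IsMassSolution.intervalIntegrable (hΦ : ContinuousOn Φ (Ici 0)) (hε : 0 ≤ ε)
    (hu : IsMassSolution Φ ε u) {T : ℝ} (hT : 0 < T) :
    IntervalIntegrable (fun s => Φ (u s)) volume 0 T := by
  obtain ⟨hpos, hbdd, heq⟩ := hu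
  set A := {s ∈ Icc 0 T | IntervalIntegrable (fun s => Φ (u s)) volume 0 s}
  have h0A : (0:ℝ) ∈ A := ⟨⟨le_rfl, hT.le⟩, IntervalIntegrable.refl⟩
  have hAbdd : BddAbove A := ⟨T, fun s hs => hs.1.2⟩
  set c := sSup A
  have hc0 : 0 ≤ c := le_csSup hAbdd h0A
  have hcT : c ≤ T := csSup_le ⟨0, h0A⟩ fun s hs => hs.1.2
  have hcont : ContinuousOn (fun s => Φ (u s)) (Ico 0 c) := by
    refine hΦ.comp (fun s hs => ?_) fun s hs => hpos s hs.1
    obtain ⟨s', hs'A, hss'⟩ := exists_lt_of_lt_csSup ⟨0, h0A⟩ hs.2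
    refine (continuousOn_Icc_of_eq_sub_integral hs'A.1.1 (fun t ht => heq t ht.1) hs'A.2 s
      ⟨hs.1, hss'.le⟩).mono_of_mem_nhdsWithin
      (mem_nhdsWithin.2 ⟨Iio s', isOpen_Iio, hss', fun y hy => ⟨hy.2.1, hy.1.le⟩⟩)
  obtain ⟨M, hM⟩ := hbdd T hT
  obtain ⟨K, hK⟩ := isCompact_Icc.exists_bound_of_continuousOn
    (hΦ.mono (Icc_subset_Ici_self : Icc 0 M ⊆ Ici 0))
  have hleft : IntegrableOn (fun s => Φ (u s)) (Ico 0 c) := by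
    refine (integrableOn_const (C := K) measure_Ico_lt_top.ne).mono'
      (hcont.aestronglyMeasurable measurableSet_Ico)
      ((ae_restrict_iff' measurableSet_Ico).2 (Eventually.of_forall fun s hs => ?_))
    exact hK _ ⟨hpos s hs.1, hM ⟨s, ⟨hs.1, hs.2.le.trans hcT⟩, rfl⟩⟩
  have hright : IntegrableOn (fun s => Φ (u s)) (Icc c T) := by
    rw [integrableOn_Icc_iff_integrableOn_Ioc]
    refine (((hΦ.comp (continuous_const.mul continuous_id).continuousOn fun s hs =>
      mul_nonneg hε (hc0.trans hs.1)).integrableOn_Icc).mono_set Ioc_subset_Icc_self).congr_fun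
      (fun s hs => ?_) measurableSet_Ioc
    have hni : ¬ IntervalIntegrable (fun s => Φ (u s)) volume 0 s := fun h =>
      hs.1.not_ge (le_csSup hAbdd ⟨⟨hc0.trans hs.1.le, hs.2⟩, h⟩)
    simp [heq s (hc0.trans hs.1.le), intervalIntegral.integral_undef hni]
  rw [intervalIntegrable_iff_integrableOn_Icc_of_le hT.le, ← Ico_union_Icc_eq_Icc hc0 hcT]
  exact hleft.union hright

lemma IsMassSolution.continuousOn (hΦ : ContinuousOn Φ (Ici 0)) (hε : 0 ≤ ε)
    (hu : IsMassSolution Φ ε u) : ContinuousOn u (Ici 0) := by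
  intro s (hs : 0 ≤ s)
  have hT : 0 < s + 1 := by linarith
  refine (continuousOn_Icc_of_eq_sub_integral hT.le (fun t ht => hu.2.2 t ht.1)
    (hu.intervalIntegrable hΦ hε hT) s ⟨hs, by linarith⟩).mono_of_mem_nhdsWithin
    (mem_nhdsWithin.2 ⟨Iio (s + 1), isOpen_Iio, by simp, fun y hy => ⟨hy.2, hy.1.le⟩⟩)

lemma IsMassSolution.hasDerivAt (hΦ : ContinuousOn Φ (Ici 0)) (hε : 0 ≤ ε)
    (hu : IsMassSolution Φ ε u) {s : ℝ} (hs : 0 < s) : HasDerivAt u (ε - Φ (u s)) s := by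
  have hg : ContinuousOn (fun s => Φ (u s)) (Ici 0) :=
    hΦ.comp (hu.continuousOn hΦ hε) fun s hs => hu.1 s hs
  have hprim := intervalIntegral.integral_hasDerivAt_right (hu.intervalIntegrable hΦ hε hs)
    ((hg.mono Ioi_subset_Ici_self).stronglyMeasurableAtFilter isOpen_Ioi s hs)
    (hg.continuousAt (Ici_mem_nhds hs))
  refine ((((hasDerivAt_id s).const_mul ε).sub hprim).congr_of_eventuallyEq ?_).congr_deriv
    (by simp)
  filter_upwards [Ioi_mem_nhds hs] with y hy using hu.2.2 y hy.le

lemma IsMassSolution.mul_integral_exp_sub_eq (hΦ : ContinuousOn Φ (Ici 0)) (hε : 0 ≤ ε)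
    (hu : IsMassSolution Φ ε u) (α : ℝ) {t : ℝ} (ht : 0 ≤ t) :
    ε * (∫ s in (0:ℝ)..t, Real.exp (-α * s)) - u t =
      ∫ s in (0:ℝ)..t, Real.exp (-α * (t - s)) * (Φ (u s) - α * u s) := by
  have hucont : ContinuousOn u (Icc 0 t) := (hu.continuousOn hΦ hε).mono Icc_subset_Ici_self
  have hgcont : ContinuousOn (fun s => Φ (u s)) (Icc 0 t) :=
    hΦ.comp hucont fun s hs => hu.1 s hs.1
  have hEc : ContinuousOn (fun s => Real.exp (-α * (t - s))) (Icc 0 t) :=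
    (by fun_prop : Continuous fun s => Real.exp (-α * (t - s))).continuousOn
  have hmild := sub_exp_mul_eq_integral (f := fun s => ε - Φ (u s)) α ht hucont
    (continuousOn_const.sub hgcont) fun s hs => hu.hasDerivAt hΦ hε hs.1
  have hu0 : u 0 = 0 := by simpa using hu.2.2 0 le_rfl
  rw [hu0, mul_zero, sub_zero] at hmild
  have hI₁ : IntervalIntegrable (fun s => ε * Real.exp (-α * (t - s))) volume 0 t :=
    (by fun_prop : Continuous fun s => ε * Real.exp (-α * (t - s))).intervalIntegrable 0 t
  have hI₂ : IntervalIntegrable (fun s => Real.exp (-α * (t - s)) * (ε - Φ (u s) + α * u s))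
      volume 0 t := ContinuousOn.intervalIntegrable_of_Icc ht
    (hEc.mul ((continuousOn_const.sub hgcont).add (continuousOn_const.mul hucont)))
  rw [hmild, ← integral_exp_neg_mul_sub, ← intervalIntegral.integral_const_mul,
    ← intervalIntegral.integral_sub hI₁ hI₂]
  congr 1 with s
  ring

lemma IsMassSolution.le_mul_integral_exp (hΦ : ContinuousOn Φ (Ici 0)) (hε : 0 ≤ ε)
    (hu : IsMassSolution Φ ε u) {α : ℝ} (hαΦ : ∀ lam, 0 ≤ lam → α * lam ≤ Φ lam) {t : ℝ}
    (ht : 0 ≤ t) : u t ≤ ε * ∫ s in (0:ℝ)..t, Real.exp (-α * s) := by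
  have := hu.mul_integral_exp_sub_eq hΦ hε α ht
  have : 0 ≤ ∫ s in (0:ℝ)..t, Real.exp (-α * (t - s)) * (Φ (u s) - α * u s) :=
    intervalIntegral.integral_nonneg ht fun s hs =>
      mul_nonneg (Real.exp_pos _).le (sub_nonneg.2 (hαΦ _ (hu.1 s hs.1)))
  linarith

lemma IsMassSolution.mul_integral_exp_sub_le (hΦ : ContinuousOn Φ (Ici 0)) (hε : 0 ≤ ε)
    (hu : IsMassSolution Φ ε u) {α ρ t : ℝ} (ht : 0 ≤ t)
    (hρ : ∀ s ∈ Icc 0 t, Φ (u s) - α * u s ≤ ρ) :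
    ε * (∫ s in (0:ℝ)..t, Real.exp (-α * s)) - u t ≤ ρ * ∫ s in (0:ℝ)..t, Real.exp (-α * s) := by
  have hucont : ContinuousOn u (Icc 0 t) := (hu.continuousOn hΦ hε).mono Icc_subset_Ici_self
  have hEc : ContinuousOn (fun s => Real.exp (-α * (t - s))) (Icc 0 t) :=
    (by fun_prop : Continuous fun s => Real.exp (-α * (t - s))).continuousOn
  rw [hu.mul_integral_exp_sub_eq hΦ hε α ht, ← integral_exp_neg_mul_sub,
    ← intervalIntegral.integral_const_mul]
  refine intervalIntegral.integral_mono_on ht (ContinuousOn.intervalIntegrable_of_Icc ht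
    (hEc.mul ((hΦ.comp hucont fun s hs => hu.1 s hs.1).sub (continuousOn_const.mul hucont))))
    (ContinuousOn.intervalIntegrable_of_Icc ht (continuousOn_const.mul hEc)) fun s hs => ?_
  rw [mul_comm ρ]
  exact mul_le_mul_of_nonneg_left (hρ s hs) (Real.exp_pos _).le

end MassEquation

section Asymptotics

variable {α β : ℝ} {π : Measure ℝ}

lemma IsMassSolution.phiIoi_bounds (hβ : 0 ≤ β) (hsupp : π (Iic 0) = 0)
    (hint : Integrable (fun θ => min θ (θ ^ 2)) π) {r ε : ℝ} (hr : 0 < r) (hε : 0 ≤ ε)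
    {u : ℝ → ℝ} (hu : IsMassSolution (PhiIoi α β π r) ε u) {t : ℝ} (ht : 0 ≤ t) :
    0 ≤ ε * (∫ s in (0:ℝ)..t, Real.exp (-α * s)) - u t ∧
      ε * (∫ s in (0:ℝ)..t, Real.exp (-α * s)) - u t ≤
        (β * (ε * ∫ s in (0:ℝ)..t, Real.exp (-α * s)) ^ 2
          + jumpPart π (ε * ∫ s in (0:ℝ)..t, Real.exp (-α * s))
          + (ε * ∫ s in (0:ℝ)..t, Real.exp (-α * s)) * ∫ θ in Ioi r, θ ∂π)
        * ∫ s in (0:ℝ)..t, Real.exp (-α * s) := by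
  have hΦ := continuousOn_phiIoi α β hsupp hint hr
  have hαΦ : ∀ lam, 0 ≤ lam → α * lam ≤ PhiIoi α β π r lam :=
    fun lam hl => mul_le_phiIoi α hβ π hr.le hl
  refine ⟨sub_nonneg.2 (hu.le_mul_integral_exp hΦ hε hαΦ ht),
    hu.mul_integral_exp_sub_le hΦ hε ht fun s hs => ?_⟩
  exact phiIoi_sub_mul_le α hβ hsupp hint hr (hu.1 s hs.1)
    ((hu.le_mul_integral_exp hΦ hε hαΦ hs.1).trans
      (mul_le_mul_of_nonneg_left (integral_exp_neg_mul_mono α hs.1 hs.2) hε))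

theorem tendsto_mass_div_measure_Ioi (hβ : 0 ≤ β) (hsupp : π (Iic 0) = 0)
    (hint : Integrable (fun θ => min θ (θ ^ 2)) π)
    (hunbdd : ∀ r : ℝ, 0 < r → 0 < (π (Ioi r)).toReal) {u : ℝ → ℝ → ℝ}
    (hu : ∀ r : ℝ, 0 < r → IsMassSolution (PhiIoi α β π r) ((π (Ioi r)).toReal) (u r))
    {t : ℝ} (ht : 0 < t) :
    Tendsto (fun r => u r t / (π (Ioi r)).toReal) atTop
      (𝓝 (∫ s in (0:ℝ)..t, Real.exp (-α * s))) := by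
  set w := ∫ s in (0:ℝ)..t, Real.exp (-α * s)
  set ε := fun r => (π (Ioi r)).toReal
  have hw : 0 < w := integral_exp_neg_mul_pos α ht
  have hΛ : Tendsto (fun r => ε r * w) atTop (𝓝[>] 0) :=
    tendsto_nhdsWithin_iff.2 ⟨by simpa using (tendsto_measure_Ioi_toReal hint).mul_const w,
      (eventually_gt_atTop 0).mono fun r hr => mul_pos (hunbdd r hr) hw⟩
  have hbound : Tendsto (fun r => w ^ 2 * (β * (ε r * w) + jumpPart π (ε r * w) / (ε r * w)
      + ∫ θ in Ioi r, θ ∂π)) atTop (𝓝 0) := by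
    simpa using ((((tendsto_nhdsWithin_iff.1 hΛ).1.const_mul β).add
      ((tendsto_jumpPart_div hsupp hint).comp hΛ)).add (tendsto_setIntegral_Ioi_id hint)).const_mul
      (w ^ 2)
  refine tendsto_iff_dist_tendsto_zero.2
    (squeeze_zero' (Eventually.of_forall fun _ => dist_nonneg) ?_ hbound)
  filter_upwards [eventually_gt_atTop 0] with r hr
  obtain ⟨h₀, h₁⟩ := (hu r hr).phiIoi_bounds hβ hsupp hint hr ENNReal.toReal_nonneg ht.le
  have hεr : 0 < ε r := hunbdd r hr
  rw [Real.dist_eq, abs_sub_comm, abs_of_nonneg (by rw [sub_nonneg, div_le_iff₀ hεr]; linarith)]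
  calc w - u r t / ε r = (ε r * w - u r t) / ε r := by field_simp
    _ ≤ (β * (ε r * w) ^ 2 + jumpPart π (ε r * w) + ε r * w * ∫ θ in Ioi r, θ ∂π) * w / ε r := by
      gcongr
    _ = _ := by field_simp

end Asymptotics

lemma tendsto_one_sub_exp_neg_mul_div {ι : Type*} {l : Filter ι} {v ε : ι → ℝ} {L x : ℝ}
    (hx : 0 ≤ x) (hv : ∀ᶠ i in l, 0 ≤ v i) (hεpos : ∀ᶠ i in l, 0 < ε i)
    (hε : Tendsto ε l (𝓝 0)) (h : Tendsto (fun i => v i / ε i) l (𝓝 L)) :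
    Tendsto (fun i => (1 - Real.exp (-x * v i)) / ε i) l (𝓝 (x * L)) := by
  have herr : Tendsto (fun i => x ^ 2 * (v i / ε i) ^ 2 * ε i) l (𝓝 0) := by
    simpa using ((h.pow 2).const_mul (x ^ 2)).mul hε
  have hclose : Tendsto (fun i => (1 - Real.exp (-x * v i)) / ε i - x * (v i / ε i)) l (𝓝 0) := by
    refine squeeze_zero_norm' ?_ herr
    filter_upwards [hv, hεpos] with i hvi hεi
    have hquad := (Real.exp_neg_sub_one_add_le_min (mul_nonneg hx hvi)).trans (min_le_right _ _)
    have e₁ : (1 - Real.exp (-x * v i)) / ε i - x * (v i / ε i) =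
        -((Real.exp (-(x * v i)) - 1 + x * v i) / ε i) := by
      rw [neg_mul]; field_simp; ring
    have e₂ : x ^ 2 * (v i / ε i) ^ 2 * ε i = (x * v i) ^ 2 / ε i := by field_simp
    rw [e₁, e₂, norm_neg, Real.norm_eq_abs,
      abs_of_nonneg (div_nonneg (Real.exp_neg_sub_one_add_nonneg _) hεi.le)]
    exact div_le_div_of_nonneg_right hquad hεi.le
  simpa using hclose.add (h.const_mul x)

theorem local_maximal_jump_tail_asymptotics_general
    (α β : ℝ) (hβ : 0 ≤ β) (π : Measure ℝ)
    (hsupp : π (Set.Iic 0) = 0)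
    (hint : Integrable (fun θ => min θ (θ ^ 2)) π)
    (hunbdd : ∀ r : ℝ, 0 < r → 0 < (π (Set.Ioi r)).toReal)
    (u : ℝ → ℝ → ℝ)
    (hu : ∀ r : ℝ, 0 < r →
      IsMassSolution (PhiIoi α β π r) ((π (Set.Ioi r)).toReal) (u r)) :
    (∀ t : ℝ, 0 < t → ∀ x : ℝ, 0 < x →
      Tendsto
        (fun r => (1 - Real.exp (-x * u r t)) / (π (Set.Ioi r)).toReal)
        atTop (nhds (x * ∫ s in (0:ℝ)..t, Real.exp (-α * s)))) ∧
    (∀ t : ℝ, 0 < t →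
      Tendsto (fun r => u r t / (π (Set.Ioi r)).toReal)
        atTop (nhds (∫ s in (0:ℝ)..t, Real.exp (-α * s)))) := by
  have hmass : ∀ t : ℝ, 0 < t → Tendsto (fun r => u r t / (π (Set.Ioi r)).toReal) atTop
      (𝓝 (∫ s in (0:ℝ)..t, Real.exp (-α * s))) :=
    fun t ht => tendsto_mass_div_measure_Ioi hβ hsupp hint hunbdd hu ht
  refine ⟨fun t ht x hx => ?_, hmass⟩
  have hpos : ∀ᶠ r : ℝ in atTop, 0 < r := eventually_gt_atTop 0
  exact tendsto_one_sub_exp_neg_mul_div hx.le (hpos.mono fun r hr => (hu r hr).1 t ht.le)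
    (hpos.mono hunbdd) (tendsto_measure_Ioi_toReal hint) (hmass t ht)

/-- Analytic form of Theorem 3.3: the tail of the local maximal jump is
asymptotically `x (1 - e^{-αt})/α · π((r,∞))` as `r → ∞`. -/
theorem local_maximal_jump_tail_asymptotics
    (α β : ℝ) (hβ : 0 ≤ β) (π : Measure ℝ)
    (hsupp : π (Set.Iic 0) = 0) (hσ : SigmaFinite π)
    (hint : Integrable (fun θ => min θ (θ ^ 2)) π)
    (hunbdd : ∀ r : ℝ, 0 < r → 0 < (π (Set.Ioi r)).toReal)
    (u : ℝ → ℝ → ℝ)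
    (hu : ∀ r : ℝ, 0 < r →
      IsMassSolution (PhiIoi α β π r) ((π (Set.Ioi r)).toReal) (u r)) :
    (∀ t : ℝ, 0 < t → ∀ x : ℝ, 0 < x →
      Tendsto
        (fun r => (1 - Real.exp (-x * u r t)) / (π (Set.Ioi r)).toReal)
        atTop (nhds (x * ∫ s in (0:ℝ)..t, Real.exp (-α * s)))) ∧
    (∀ t : ℝ, 0 < t →
      Tendsto (fun r => u r t / (π (Set.Ioi r)).toReal)
        atTop (nhds (∫ s in (0:ℝ)..t, Real.exp (-α * s)))) :=
  local_maximal_jump_tail_asymptotics_general α β hβ π hsupp hint hunbdd u hu
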